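/- arXiv:1711.05652 — 7 statements merged into one kernel-verified Lean document; each statement's English description precedes it below -/
import Mathlib

section
/- Let p be a projection in a unital C*-algebra A and let x ∈ A with ‖x‖ = 1. If p x p = p, then x = p + (1 - p) x (1 - p). -/
lemma key_corner {A : Type*} [CStarAlgebra A] (p x : A)
    (hpi : IsIdempotentElem p) (hps : IsSelfAdjoint p) (hx : ‖x‖ = 1)
    (h : p * x * p = p) :
    p * x * (1 - p) = 0 := by
  letI := CStarAlgebra.spectralOrder A
  letI := CStarAlgebra.spectralOrderedRing A
  have hp2 : p * p = p := hpi
  have hpstar : star p = p := hps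
  have hpq : p * (1 - p) = 0 := by rw [mul_sub, mul_one, hp2, sub_self]
  have hqq : (1 - p) * (1 - p) = 1 - p := by rw [sub_mul, one_mul, hpq, sub_zero]
  set a := p * x * (1 - p) with ha
  set b := a * star a with hb
  have hb0 : (0 : A) ≤ b := mul_star_self_nonneg a
  have hstar : star a = (1 - p) * star x * p := by
    simp [ha, star_sub, hpstar, mul_assoc]
  have hx2 : p * star x * p = p := by
    have := congrArg star h
    simpa [star_mul, hpstar, mul_assoc] using this
  have expand : a * star a = p * x * star x * p - p := by
    rw [ha, hstar]
    calc p * x * (1 - p) * ((1 - p) * star x * p)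
        = p * x * ((1 - p) * (1 - p)) * (star x * p) := by noncomm_ring
      _ = p * x * (1 - p) * (star x * p) := by rw [hqq]
      _ = p * x * star x * p - (p * x * p) * (star x * p) := by noncomm_ring
      _ = p * x * star x * p - p := by
          rw [h, ← mul_assoc, hx2]
  have hkey : p + b = (p * x) * star (p * x) := by
    rw [hb, expand, star_mul, hpstar]
    noncomm_ring
  have hpnorm : ‖p‖ ≤ 1 := by
    rcases eq_or_ne p 0 with hp0 | hp0
    · simp [hp0]
    · have h1 : ‖p‖ * ‖p‖ = ‖p‖ := by
        rw [← CStarRing.norm_star_mul_self (x := p), hpstar, hp2]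
      have h2 : ‖p‖ ≠ 0 := norm_ne_zero_iff.mpr hp0
      nlinarith [norm_nonneg p]
  have hnorm : ‖p + b‖ ≤ 1 := by
    rw [hkey, CStarRing.norm_self_mul_star]
    calc ‖p * x‖ * ‖p * x‖ ≤ (‖p‖ * ‖x‖) * (‖p‖ * ‖x‖) := by
          have := norm_mul_le p x
          exact mul_le_mul this this (norm_nonneg _) (by positivity)
      _ ≤ 1 := by rw [hx]; nlinarith [norm_nonneg p]
  have hbsa : IsSelfAdjoint b := IsSelfAdjoint.mul_star_self a
  have hsa : IsSelfAdjoint (p + b) := hps.add hbsa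
  have halg_nonneg : ∀ s : ℝ, 0 ≤ s → (0 : A) ≤ algebraMap ℝ A s := by
    intro s hs
    have : algebraMap ℝ A s = star (algebraMap ℝ A (Real.sqrt s)) *
        algebraMap ℝ A (Real.sqrt s) := by
      rw [show star (algebraMap ℝ A (Real.sqrt s)) = algebraMap ℝ A (Real.sqrt s) from
        IsSelfAdjoint.algebraMap A (isSelfAdjoint_iff.mpr rfl), ← map_mul,
        Real.mul_self_sqrt hs]
    rw [this]
    exact star_mul_self_nonneg _
  have hle1 : p + b ≤ 1 := by
    calc p + b ≤ algebraMap ℝ A ‖p + b‖ := hsa.le_algebraMap_norm_self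
      _ ≤ 1 := by
        have h0 : (0 : A) ≤ algebraMap ℝ A (1 - ‖p + b‖) :=
          halg_nonneg _ (by linarith)
        have : algebraMap ℝ A (1 - ‖p + b‖) = 1 - algebraMap ℝ A ‖p + b‖ := by
          rw [map_sub, map_one]
        rw [this] at h0
        exact sub_nonneg.mp h0
  have hble : b ≤ 1 - p := le_sub_iff_add_le.mpr (by rwa [add_comm])
  have hconj : p * b * p ≤ p * (1 - p) * p := by
    have := star_left_conjugate_le_conjugate hble p
    rwa [hpstar] at this
  have hpbp : p * b * p = b := by
    have h1 : p * a = a := by rw [ha, ← mul_assoc, ← mul_assoc, hp2]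
    have h2 : star a * p = star a := by
      have := congrArg star h1
      simpa [star_mul, hpstar] using this
    rw [hb, ← mul_assoc, h1, mul_assoc, h2]
  have hz : p * (1 - p) * p = 0 := by rw [hpq, zero_mul]
  have hb_le0 : b ≤ 0 := by rw [← hpbp, ← hz]; exact hconj
  have hbz : b = 0 := le_antisymm hb_le0 hb0
  exact (CStarRing.mul_star_self_eq_zero_iff a).mp hbz

/-- If `p` is a projection in a unital C*-algebra, `‖x‖ = 1` and `p x p = p`, then
`x = p + (1 - p) x (1 - p)`. -/
theorem eq_add_compl_mul_compl {A : Type*} [CStarAlgebra A] (p x : A)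
    (hpi : IsIdempotentElem p) (hps : IsSelfAdjoint p) (hx : ‖x‖ = 1)
    (h : p * x * p = p) :
    x = p + (1 - p) * x * (1 - p) := by
  have hp2 : p * p = p := hpi
  have hpstar : star p = p := hps
  have h1 : p * x * (1 - p) = 0 := key_corner p x hpi hps hx h
  have hx2 : p * star x * p = p := by
    have := congrArg star h
    simpa [star_mul, hpstar, mul_assoc] using this
  have h2' : p * star x * (1 - p) = 0 := by
    refine key_corner p (star x) hpi hps ?_ hx2
    rw [norm_star, hx]
  have h2 : (1 - p) * x * p = 0 := by
    have := congrArg star h2'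
    simpa [star_mul, star_sub, hpstar, mul_assoc] using this
  have hpx : p * x = p := by
    have e : p * x * (1 - p) + p * x * p = p * x := by noncomm_ring
    rw [h1, h] at e; simpa using e.symm
  have hxp : x * p = p := by
    have e : (1 - p) * x * p + p * x * p = x * p := by noncomm_ring
    rw [h2, h] at e; simpa using e.symm
  have e2 : p + (1 - p) * x * (1 - p) = p + x - p * x - x * p + p * x * p := by
    noncomm_ring
  rw [e2, hpx, hxp, hp2]
  abel
end

section
/- Let A and B be unital C*-algebras and let Δ : S(A⁺) → S(B⁺) be a surjective isometry with Δ(1) = 1. Then Δ maps the set of positive invertible norm-one elements of A onto the set of positive invertible norm-one elements of B. -/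
lemma aux_isUnit_of_norm_sub_one_lt {A : Type*} [NormedRing A] [CompleteSpace A] {x : A}
    (h : ‖x - 1‖ < 1) : IsUnit x := by
  have h' : ‖1 - x‖ < 1 := by rwa [norm_sub_rev]
  simpa using (Units.oneSub (1 - x) h').isUnit

lemma aux_norm_sub_one_lt {A : Type*} [CStarAlgebra A] [PartialOrder A] [StarOrderedRing A]
    {x : A} (hx : 0 ≤ x) (hx1 : ‖x‖ = 1) (hu : IsUnit x) : ‖x - 1‖ < 1 := by
  have hnt : Nontrivial A := nontrivial_of_ne x 0 (by rintro rfl; simp at hx1)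
  have hsa : IsSelfAdjoint x := .of_nonneg hx
  have hxle : x ≤ 1 := (CStarAlgebra.norm_le_one_iff_of_nonneg x hx).mp hx1.le
  have h0 : (0 : ℝ) ∉ spectrum ℝ x := spectrum.zero_notMem ℝ hu
  have hpos : ∀ t ∈ spectrum ℝ x, 0 < t := fun t ht =>
    lt_of_le_of_ne (spectrum_nonneg_of_nonneg hx ht) (fun h => h0 (h ▸ ht))
  obtain ⟨r, hr, hle⟩ := (CFC.exists_pos_algebraMap_le_iff hsa).mpr hpos
  set r' := min r 1 with hr'def
  have hr' : 0 < r' := lt_min hr one_pos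
  have hr'1 : r' ≤ 1 := min_le_right _ _
  have hmapnn : ∀ c : ℝ, 0 ≤ c → 0 ≤ algebraMap ℝ A c := by
    intro c hc
    have : algebraMap ℝ A c = star (algebraMap ℝ A (Real.sqrt c)) * algebraMap ℝ A (Real.sqrt c) := by
      rw [← algebraMap_star_comm, star_trivial, ← map_mul, Real.mul_self_sqrt hc]
    rw [this]
    exact star_mul_self_nonneg _
  have hle' : algebraMap ℝ A r' ≤ x := le_trans (by
    rw [← sub_nonneg, ← map_sub]
    exact hmapnn _ (by simp [hr'def])) hle
  have h1x : 0 ≤ 1 - x := sub_nonneg.mpr hxle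
  have h1x2 : 1 - x ≤ algebraMap ℝ A (1 - r') := by
    rw [map_sub, map_one]
    exact sub_le_sub_left hle' 1
  calc ‖x - 1‖ = ‖1 - x‖ := norm_sub_rev _ _
    _ ≤ ‖algebraMap ℝ A (1 - r')‖ := CStarAlgebra.norm_le_norm_of_nonneg_of_le h1x h1x2
    _ = |1 - r'| := by rw [norm_algebraMap']; simp
    _ < 1 := by rw [abs_of_nonneg (by linarith)]; linarith


/-- A surjective unital isometry between the sets of positive norm-one elements of two
unital C*-algebras maps the positive invertible norm-one elements of `A` onto those of `B`. -/
theorem image_pos_invertible_sphere {A B : Type*} [CStarAlgebra A] [PartialOrder A]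
    [StarOrderedRing A] [CStarAlgebra B] [PartialOrder B] [StarOrderedRing B]
    (Δ : A → B)
    (hmaps : Set.MapsTo Δ {x : A | 0 ≤ x ∧ ‖x‖ = 1} {y : B | 0 ≤ y ∧ ‖y‖ = 1})
    (hsurj : Set.SurjOn Δ {x : A | 0 ≤ x ∧ ‖x‖ = 1} {y : B | 0 ≤ y ∧ ‖y‖ = 1})
    (hinj : Set.InjOn Δ {x : A | 0 ≤ x ∧ ‖x‖ = 1})
    (hiso : ∀ x ∈ {x : A | 0 ≤ x ∧ ‖x‖ = 1}, ∀ y ∈ {x : A | 0 ≤ x ∧ ‖x‖ = 1},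
      ‖Δ x - Δ y‖ = ‖x - y‖)
    (hone : Δ 1 = 1) :
    Δ '' {x : A | 0 ≤ x ∧ ‖x‖ = 1 ∧ IsUnit x} = {y : B | 0 ≤ y ∧ ‖y‖ = 1 ∧ IsUnit y} := by
  rcases subsingleton_or_nontrivial A with hA | hA
  · have hempty : {x : A | 0 ≤ x ∧ ‖x‖ = 1} = ∅ := by
      ext x
      simp only [Set.mem_setOf_eq, Set.mem_empty_iff_false, iff_false, not_and]
      intro _
      rw [Subsingleton.elim x 0, norm_zero]
      norm_num
    have h1 : {x : A | 0 ≤ x ∧ ‖x‖ = 1 ∧ IsUnit x} = ∅ := by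
      rw [Set.eq_empty_iff_forall_notMem] at hempty ⊢
      exact fun x hx => hempty x ⟨hx.1, hx.2.1⟩
    rw [h1, Set.image_empty, eq_comm, Set.eq_empty_iff_forall_notMem]
    intro y hy
    obtain ⟨x, hx, -⟩ := hsurj ⟨hy.1, hy.2.1⟩
    rw [hempty] at hx
    exact hx
  · have h1A : (1 : A) ∈ {x : A | 0 ≤ x ∧ ‖x‖ = 1} := ⟨zero_le_one, norm_one⟩
    ext y
    constructor
    · rintro ⟨x, ⟨hx0, hx1, hxu⟩, rfl⟩
      obtain ⟨hΔ0, hΔ1⟩ := hmaps ⟨hx0, hx1⟩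
      refine ⟨hΔ0, hΔ1, aux_isUnit_of_norm_sub_one_lt ?_⟩
      rw [← hone, hiso x ⟨hx0, hx1⟩ 1 h1A]
      exact aux_norm_sub_one_lt hx0 hx1 hxu
    · rintro ⟨hy0, hy1, hyu⟩
      obtain ⟨x, hx, rfl⟩ := hsurj ⟨hy0, hy1⟩
      refine ⟨x, ⟨hx.1, hx.2, aux_isUnit_of_norm_sub_one_lt ?_⟩, rfl⟩
      rw [← hiso x hx 1 h1A, hone]
      exact aux_norm_sub_one_lt hy0 hy1 hyu
end

section
/- Let H be an infinite-dimensional complex Hilbert space and let a ∈ B(H) be positive, invertible, with ‖a‖ = 1 and nonzero support projection s(a). Then a co-minimal projection p (i.e., 1 - p has rank one) satisfies ‖a - p‖ = 1 if and only if 1 - p ≤ s(a). -/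
variable {H : Type*} [NormedAddCommGroup H] [InnerProductSpace ℂ H] [CompleteSpace H]

/-- The support projection of `a ∈ B(H)`: the orthogonal projection onto the eigenspace
`ker (a - 1)` of `a` for the eigenvalue `1`. -/
noncomputable def supportProjection (a : H →L[ℂ] H) : H →L[ℂ] H :=
  haveI : CompleteSpace (LinearMap.ker ((a - 1 : H →L[ℂ] H) : H →ₗ[ℂ] H)) :=
    (ContinuousLinearMap.isClosed_ker (a - 1)).completeSpace_coe
  (LinearMap.ker ((a - 1 : H →L[ℂ] H) : H →ₗ[ℂ] H)).subtypeL ∘L Submodule.orthogonalProjectionOnto (LinearMap.ker ((a - 1 : H →L[ℂ] H) : H →ₗ[ℂ] H))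

/-!
Put `x = a - p`. Since `0 ≤ a ≤ 1` and `p` is a projection, `-1 ≤ x ≤ 1`, and
`1 + x = a + (1 - p)` is invertible because `a` is; hence `‖x‖ = 1` exactly when `1 ∈ σ(x)`,
i.e. when `1 - x = (1 - a) + p` is not invertible. If `1 - p` projects onto `ℂ ξ`, this happens
iff `(1 - a) ξ = 0`: otherwise `(1 - a) + p` is bounded below, since a vector on which both
`1 - a` and `p` are small is close to a multiple of `ξ`, where `1 - a` is not small. Finally
`(1 - a) ξ = 0` says `ℂ ξ ≤ ker (a - 1)`, i.e. `1 - p ≤ s(a)`.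
-/

open RCLike
open scoped InnerProductSpace

section CStarAlgebra

variable {A : Type*} [CStarAlgebra A] [PartialOrder A] [StarOrderedRing A]

theorem CStarAlgebra.norm_eq_one_iff_not_isUnit_one_sub {x : A} (h₁ : x ≤ 1) (h₂ : -1 ≤ x)
    (hu : IsUnit (1 + x)) : ‖x‖ = 1 ↔ ¬IsUnit (1 - x) := by
  nontriviality A
  have hx : IsSelfAdjoint x := by
    simpa using (IsSelfAdjoint.of_nonneg (sub_nonneg.mpr h₁)).neg.add (.one A)
  have hle : ∀ t ∈ spectrum ℝ x, t ≤ 1 := by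
    simpa using (le_algebraMap_iff_spectrum_le (r := (1 : ℝ)) hx).mp (by simpa using h₁)
  have hge : ∀ t ∈ spectrum ℝ x, -1 ≤ t := by
    simpa using (algebraMap_le_iff_le_spectrum (r := (-1 : ℝ)) hx).mp (by simpa using h₂)
  have hneg : -1 ∉ spectrum ℝ x := by
    rw [spectrum.mem_iff, not_not, map_neg, map_one, ← neg_add']
    exact hu.neg
  have hnorm := CStarAlgebra.norm_or_neg_norm_mem_spectrum hx
  have hx₁ : ‖x‖ ≤ 1 := by
    rcases hnorm with h | h
    · exact hle _ h
    · linarith [hge _ h]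
  rw [← map_one (algebraMap ℝ A), ← spectrum.mem_iff]
  refine ⟨fun h ↦ ?_, fun h ↦ hx₁.antisymm (by simpa using spectrum.norm_le_norm_of_mem h)⟩
  rw [h] at hnorm
  exact hnorm.resolve_right hneg

end CStarAlgebra

namespace ContinuousLinearMap

section RCLike

variable {𝕜 E : Type*} [RCLike 𝕜] [NormedAddCommGroup E] [InnerProductSpace 𝕜 E]

theorem re_inner_map_sub_add (T : E →L[𝕜] E) (x y : E) :
    re ⟪T (x - y), x - y⟫_𝕜 + re ⟪T (x + y), x + y⟫_𝕜 =
      2 * re ⟪T x, x⟫_𝕜 + 2 * re ⟪T y, y⟫_𝕜 := by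
  simp only [map_sub, map_add, inner_sub_left, inner_sub_right, inner_add_left, inner_add_right]
  ring

theorem IsPositive.re_inner_map_sub_le {T : E →L[𝕜] E} (hT : T.IsPositive) (x y : E) :
    re ⟪T (x - y), x - y⟫_𝕜 ≤ 2 * re ⟪T x, x⟫_𝕜 + 2 * re ⟪T y, y⟫_𝕜 := by
  linarith [T.re_inner_map_sub_add x y, hT.re_inner_nonneg_left (x + y)]

theorem re_inner_le_norm_sq_of_le_one {T : E →L[𝕜] E} (hT : T ≤ 1) (x : E) :
    re ⟪T x, x⟫_𝕜 ≤ ‖x‖ ^ 2 := by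
  have := hT.re_inner_nonneg_left x
  rwa [sub_apply, inner_sub_left, map_sub, one_apply_eq_self, inner_self_eq_norm_sq,
    sub_nonneg] at this

theorem le_re_inner_add_starProjection_orthogonal {b : E →L[𝕜] E} (hb₀ : 0 ≤ b) (hb₁ : b ≤ 1)
    (K : Submodule 𝕜 E) [K.HasOrthogonalProjection] {c : ℝ} (hc : c ≤ 1)
    (hK : ∀ u ∈ K, c * ‖u‖ ^ 2 ≤ re ⟪b u, u⟫_𝕜) (x : E) :
    c / 3 * ‖x‖ ^ 2 ≤ re ⟪(b + Kᗮ.starProjection) x, x⟫_𝕜 := by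
  set u := K.starProjection x
  set v := Kᗮ.starProjection x
  have hxv : x - v = u := by simp [u, v]
  have hv : re ⟪v, x⟫_𝕜 = ‖v‖ ^ 2 := by
    rw [Kᗮ.re_inner_starProjection_eq_normSq x, Submodule.coe_norm]
    rfl
  have hu := hK u (K.starProjection_apply_mem x)
  have hsub := ((nonneg_iff_isPositive b).mp hb₀).re_inner_map_sub_le x v
  rw [hxv] at hsub
  have hbv := re_inner_le_norm_sq_of_le_one hb₁ v
  have hbx := ((nonneg_iff_isPositive b).mp hb₀).re_inner_nonneg_left x
  have hcv : c * ‖v‖ ^ 2 ≤ ‖v‖ ^ 2 := by nlinarith [sq_nonneg ‖v‖]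
  rw [add_apply, inner_add_left, map_add, hv, K.norm_sq_eq_add_norm_sq_starProjection x]
  linarith

end RCLike

variable {E : Type*} [NormedAddCommGroup E] [InnerProductSpace ℂ E] [CompleteSpace E]

theorem apply_eq_zero_of_re_inner_eq_zero {T : E →L[ℂ] E} (hT : 0 ≤ T) {x : E}
    (hx : re ⟪T x, x⟫_ℂ = 0) : T x = 0 := by
  set s := CFC.sqrt T
  have hs : s * s = T := CFC.sqrt_mul_sqrt_self T
  have hsx : ‖s x‖ ^ 2 = 0 := by
    rw [← hx, ← hs, mul_apply_eq_comp,
      ((nonneg_iff_isPositive s).mp (CFC.sqrt_nonneg T)).inner_left_eq_inner_right,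
      inner_self_eq_norm_sq]
  rw [← hs, mul_apply_eq_comp, norm_eq_zero.mp (pow_eq_zero_iff two_ne_zero |>.mp hsx), map_zero]

theorem isUnit_add_starProjection_orthogonal_iff {b : E →L[ℂ] E} (hb₀ : 0 ≤ b) (hb₁ : b ≤ 1)
    {K : Submodule ℂ E} [K.HasOrthogonalProjection] (hK : Module.finrank ℂ K = 1) :
    IsUnit (b + Kᗮ.starProjection) ↔ ¬K ≤ LinearMap.ker (b : E →ₗ[ℂ] E) := by
  constructor
  · intro hu hKb
    obtain ⟨⟨ξ, hξK⟩, hξ0, -⟩ := finrank_eq_one_iff'.mp hK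
    have hbξ : b ξ = 0 := hKb hξK
    have hξ : (b + Kᗮ.starProjection) ξ = 0 := by
      simp [hbξ, Submodule.starProjection_eq_self_iff.mpr hξK]
    exact hξ0 (Subtype.ext ((isUnit_iff_bijective.mp hu).1 (hξ.trans (map_zero _).symm)))
  · intro hKb
    obtain ⟨η, hηK, hbη⟩ : ∃ η ∈ K, b η ≠ 0 := by simpa [SetLike.le_def] using hKb
    have hη0 : η ≠ 0 := by rintro rfl; simp at hbη
    have hspan := (finrank_eq_one_iff_of_nonzero' (⟨η, hηK⟩ : K) (by simpa using hη0)).mp hK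
    set c := re ⟪b η, η⟫_ℂ / ‖η‖ ^ 2
    have hc0 : 0 < c := by
      exact div_pos (lt_of_le_of_ne (((nonneg_iff_isPositive b).mp hb₀).re_inner_nonneg_left η)
        fun h ↦ hbη (apply_eq_zero_of_re_inner_eq_zero hb₀ h.symm)) (by positivity)
    have hc1 : c ≤ 1 := div_le_one_of_le₀ (re_inner_le_norm_sq_of_le_one hb₁ η) (sq_nonneg _)
    have hKc : ∀ u ∈ K, c * ‖u‖ ^ 2 ≤ re ⟪b u, u⟫_ℂ := by
      intro u hu
      obtain ⟨t, ht⟩ := hspan ⟨u, hu⟩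
      obtain rfl : t • η = u := congrArg Subtype.val ht
      simp only [map_smul, inner_smul_left, inner_smul_right, norm_smul, c]
      rw [← mul_assoc, RCLike.mul_conj, ← RCLike.ofReal_pow, RCLike.re_ofReal_mul]
      exact le_of_eq (by field_simp)
    refine isUnit_of_forall_le_norm_inner_map _ (c := (⟨c / 3, by positivity⟩ : NNReal))
      (NNReal.coe_pos.mp (div_pos hc0 three_pos)) fun x ↦ ?_
    calc ‖x‖ ^ 2 * (c / 3) ≤ re ⟪(b + Kᗮ.starProjection) x, x⟫_ℂ := by
          linarith [le_re_inner_add_starProjection_orthogonal hb₀ hb₁ K hc1 hKc x]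
      _ ≤ ‖⟪(b + Kᗮ.starProjection) x, x⟫_ℂ‖ := re_le_norm _

end ContinuousLinearMap

theorem cominimal_norm_eq_one_iff_general (a p : H →L[ℂ] H)
    (ha : 0 ≤ a) (hua : IsUnit a) (hna : ‖a‖ = 1)
    (hpi : IsIdempotentElem p) (hps : IsSelfAdjoint p)
    (hrank : Module.finrank ℂ (LinearMap.range ((1 - p : H →L[ℂ] H) : H →ₗ[ℂ] H)) = 1) :
    ‖a - p‖ = 1 ↔ 1 - p ≤ supportProjection a := by
  set K := LinearMap.range ((1 - p : H →L[ℂ] H) : H →ₗ[ℂ] H)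
  have hp : IsStarProjection p := ⟨hpi, hps⟩
  obtain ⟨_, hq⟩ := isStarProjection_iff_eq_starProjection_range.mp hp.one_sub
  have hpK : p = Kᗮ.starProjection := by
    rw [Submodule.starProjection_orthogonal', ← hq, sub_sub_cancel]
  have ha₁ : a ≤ 1 := (CStarAlgebra.norm_le_one_iff_of_nonneg a).mp hna.le
  have hx₁ : a - p ≤ 1 := (sub_le_self a hp.nonneg).trans ha₁
  have hx₂ : -1 ≤ a - p :=
    neg_le_sub_iff_le_add.mpr ((sub_nonneg.mp hp.one_sub.nonneg).trans (le_add_of_nonneg_left ha))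
  have hxu : IsUnit (1 + (a - p)) := by
    rw [← add_sub_left_comm]
    exact ((hua.isStrictlyPositive ha).add_nonneg hp.one_sub.nonneg).isUnit
  have hker : LinearMap.ker ((1 - a : H →L[ℂ] H) : H →ₗ[ℂ] H) =
      LinearMap.ker ((a - 1 : H →L[ℂ] H) : H →ₗ[ℂ] H) := by
    rw [← neg_sub, ContinuousLinearMap.toLinearMap_neg, LinearMap.ker_neg]
  rw [CStarAlgebra.norm_eq_one_iff_not_isUnit_one_sub hx₁ hx₂ hxu,
    show 1 - (a - p) = 1 - a + Kᗮ.starProjection by rw [hpK]; abel,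
    ContinuousLinearMap.isUnit_add_starProjection_orthogonal_iff (sub_nonneg.mpr ha₁)
      (sub_le_self 1 ha) hrank, not_not, hker, hq]
  exact Submodule.starProjection_le_starProjection_iff.symm

/-- Let `H` be infinite-dimensional, `a ∈ B(H)` positive invertible with `‖a‖ = 1` and
`s(a) ≠ 0`.  A co-minimal projection `p` (i.e. `1 - p` of rank one) satisfies `‖a - p‖ = 1`
iff `1 - p ≤ s(a)`. -/
theorem cominimal_norm_eq_one_iff (hinf : ¬ FiniteDimensional ℂ H) (a p : H →L[ℂ] H)
    (ha : 0 ≤ a) (hua : IsUnit a) (hna : ‖a‖ = 1) (hs : supportProjection a ≠ 0)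
    (hpi : IsIdempotentElem p) (hps : IsSelfAdjoint p)
    (hrank : Module.finrank ℂ (LinearMap.range ((1 - p : H →L[ℂ] H) : H →ₗ[ℂ] H)) = 1) :
    ‖a - p‖ = 1 ↔ 1 - p ≤ supportProjection a :=
  cominimal_norm_eq_one_iff_general a p ha hua hna hpi hps hrank
end

section
/- Let H be an infinite-dimensional complex Hilbert space and let a ∈ B(H) be positive, invertible, with ‖a‖ = 1 and s(a) ≠ 0. Then a positive invertible x ∈ B(H) with ‖x‖ = 1 satisfies ‖x - p‖ = 1 for every co-minimal projection p with ‖a - p‖ = 1, if and only if s(a) ≤ x. -/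
variable {H : Type*} [NormedAddCommGroup H] [InnerProductSpace ℂ H] [CompleteSpace H]

/-! A co-minimal projection is `p = 1 - |e⟩⟨e|` for a unit vector `e`. For a positive invertible
contraction `a` we have `-1 ≤ a - p ≤ 1`, and `-1` is not in the spectrum of `a - p` because
`a - p + 1 ≥ a` is invertible; so `‖a - p‖ = 1` iff `(1 - a) + p` is not invertible. This happens
exactly when `(1 - a) e = 0`: otherwise `√(1 - a)` controls the component along `e` and `p` the
orthogonal one, so the quadratic form of `(1 - a) + p` is bounded below. Hence the condition on `x` says that
every unit vector fixed by `a` is fixed by `x`, i.e. `ker (a - 1) ⊆ ker (x - 1)`, which for a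
positive contraction `x` is equivalent to `s(a) ≤ x`. -/

open ContinuousLinearMap Submodule
open scoped InnerProductSpace

def IsCominimalProjection (p : H →L[ℂ] H) : Prop :=
  IsIdempotentElem p ∧ IsSelfAdjoint p ∧
    Module.finrank ℂ (LinearMap.range ((1 - p : H →L[ℂ] H) : H →ₗ[ℂ] H)) = 1

theorem isCominimalProjection_iff {p : H →L[ℂ] H} :
    IsCominimalProjection p ↔ ∃ e : H, ‖e‖ = 1 ∧ p = (ℂ ∙ e)ᗮ.starProjection := by
  constructor
  · rintro ⟨hidem, hsa, hrank⟩
    have hq : IsStarProjection (1 - p) := IsStarProjection.one_sub ⟨hidem, hsa⟩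
    obtain ⟨_, hq_eq⟩ := isStarProjection_iff_eq_starProjection_range.mp hq
    have := Module.finite_of_finrank_eq_succ hrank
    obtain ⟨v, hv, hv0⟩ := exists_mem_ne_zero_of_ne_bot
      (one_le_finrank_iff.mp hrank.ge)
    set e : H := (‖v‖⁻¹ : ℂ) • v
    have he : ‖e‖ = 1 := norm_smul_inv_norm hv0
    have hrange := eq_span_singleton_of_mem_of_finrank_eq_one hrank
      (smul_mem _ _ hv) (norm_ne_zero_iff.mp (he ▸ one_ne_zero))
    refine ⟨e, he, ?_⟩
    rw [starProjection_orthogonal', ← starProjection_inj.mpr hrange, ← hq_eq,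
      sub_sub_cancel]
  · rintro ⟨e, he, rfl⟩
    refine ⟨isIdempotentElem_starProjection _, isSelfAdjoint_starProjection _, ?_⟩
    rw [starProjection_orthogonal', sub_sub_cancel, range_starProjection]
    exact finrank_span_singleton (norm_ne_zero_iff.mp (he ▸ one_ne_zero))

theorem norm_le_one_of_neg_one_le_of_le_one {A : Type*} [CStarAlgebra A] [PartialOrder A]
    [StarOrderedRing A] {t : A} (ht : IsSelfAdjoint t) (h₁ : -1 ≤ t) (h₂ : t ≤ 1) : ‖t‖ ≤ 1 := by
  nontriviality A
  rcases CStarAlgebra.norm_or_neg_norm_mem_spectrum ht with h | h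
  · exact (le_algebraMap_iff_spectrum_le ht).mp (by simpa using h₂) _ h
  · linarith [(algebraMap_le_iff_le_spectrum (r := -1) ht).mp (by simpa using h₁) _ h]

theorem mul_sq_add_sq_le_of_le_add_mul {m M D S W : ℝ} (hmD : 0 ≤ m * D)
    (h : m * D ≤ S + M * W) :
    m ^ 2 * (D ^ 2 + W ^ 2) ≤ (2 * M ^ 2 + m ^ 2 + 2) * (S ^ 2 + W ^ 2) := by
  have hsq : (m * D) ^ 2 ≤ 2 * S ^ 2 + 2 * M ^ 2 * W ^ 2 := by
    nlinarith [sq_nonneg (S - M * W), mul_le_mul h h hmD (hmD.trans h)]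
  nlinarith [sq_nonneg S, sq_nonneg W, sq_nonneg M, sq_nonneg m]

theorem re_inner_apply_self_eq_norm_sqrt_apply_sq {b : H →L[ℂ] H} (hb : 0 ≤ b) (v : H) :
    RCLike.re ⟪b v, v⟫_ℂ = ‖CFC.sqrt b v‖ ^ 2 := by
  have hs : IsSelfAdjoint (CFC.sqrt b) := .of_nonneg (CFC.sqrt_nonneg b)
  conv_lhs =>
    rw [← CFC.sqrt_mul_sqrt_self b hb, mul_apply_eq_comp, ← hs.adjoint_eq, adjoint_inner_left]
  rw [hs.adjoint_eq, inner_self_eq_norm_sq]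

theorem apply_eq_zero_of_re_inner_apply_self_le_zero {b : H →L[ℂ] H} (hb : 0 ≤ b) {v : H}
    (hv : RCLike.re ⟪b v, v⟫_ℂ ≤ 0) : b v = 0 := by
  rw [re_inner_apply_self_eq_norm_sqrt_apply_sq hb] at hv
  have hsv : CFC.sqrt b v = 0 := by simpa using hv
  rw [← CFC.sqrt_mul_sqrt_self b hb, mul_apply_eq_comp, hsv, map_zero]

theorem isUnit_add_starProjection_orthogonal_singleton {b : H →L[ℂ] H} (hb : 0 ≤ b) {e : H}
    (he : ‖e‖ = 1) (hbe : b e ≠ 0) : IsUnit (b + (ℂ ∙ e)ᗮ.starProjection) := by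
  set s := CFC.sqrt b
  set P := (ℂ ∙ e)ᗮ.starProjection
  set Q := (ℂ ∙ e).starProjection
  set m := ‖s e‖
  set M := ‖s‖
  have hm : 0 < m := by
    have hbs : b e = s (s e) := by rw [← mul_apply_eq_comp, CFC.sqrt_mul_sqrt_self b hb]
    exact norm_pos_iff.2 fun h ↦ hbe (by rw [hbs, h, map_zero])
  have hC : 0 < 2 * M ^ 2 + m ^ 2 + 2 := by positivity
  refine isUnit_of_forall_le_norm_inner_map _ (c := ⟨m ^ 2 / (2 * M ^ 2 + m ^ 2 + 2),
    by positivity⟩) (by change (0 : ℝ) < _; positivity) fun ξ ↦ ?_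
  have hlow : m * ‖Q ξ‖ ≤ ‖s ξ‖ + M * ‖P ξ‖ := by
    have hsQ : ‖s (Q ξ)‖ = m * ‖Q ξ‖ := by
      rw [starProjection_unit_singleton ℂ he, map_smul, norm_smul, norm_smul, he, mul_one,
        mul_comm]
    rw [← hsQ, eq_sub_of_add_eq (starProjection_add_starProjection_orthogonal ξ), map_sub]
    exact (norm_sub_le _ _).trans (by gcongr; exact s.le_opNorm _)
  have hform : RCLike.re ⟪(b + P) ξ, ξ⟫_ℂ = ‖s ξ‖ ^ 2 + ‖P ξ‖ ^ 2 := by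
    rw [add_apply, inner_add_left, map_add, re_inner_apply_self_eq_norm_sqrt_apply_sq hb,
      re_inner_starProjection_eq_normSq]
    rfl
  calc ‖ξ‖ ^ 2 * (m ^ 2 / (2 * M ^ 2 + m ^ 2 + 2))
      = m ^ 2 * (‖Q ξ‖ ^ 2 + ‖P ξ‖ ^ 2) / (2 * M ^ 2 + m ^ 2 + 2) := by
        rw [norm_sq_eq_add_norm_sq_starProjection ξ (ℂ ∙ e)]; ring
    _ ≤ ‖s ξ‖ ^ 2 + ‖P ξ‖ ^ 2 := by
        rw [div_le_iff₀' hC]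
        exact mul_sq_add_sq_le_of_le_add_mul (by positivity) hlow
    _ = RCLike.re ⟪(b + P) ξ, ξ⟫_ℂ := hform.symm
    _ ≤ ‖⟪(b + P) ξ, ξ⟫_ℂ‖ := RCLike.re_le_norm _

theorem norm_sub_starProjection_orthogonal_singleton_eq_one_iff {a : H →L[ℂ] H} (ha : 0 ≤ a)
    (hua : IsUnit a) (ha1 : a ≤ 1) {e : H} (he : ‖e‖ = 1) :
    ‖a - (ℂ ∙ e)ᗮ.starProjection‖ = 1 ↔ a e = e := by
  set P := (ℂ ∙ e)ᗮ.starProjection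
  have hP : IsStarProjection P := isStarProjection_starProjection
  have hPe : P e = 0 := starProjection_orthogonalComplement_singleton_eq_zero e
  have hsa : IsSelfAdjoint (a - P) := (IsSelfAdjoint.of_nonneg ha).sub hP.isSelfAdjoint
  constructor
  · intro hnorm
    have : Nontrivial H := ⟨e, 0, ne_zero_of_norm_ne_zero (by simp [he])⟩
    rcases CStarAlgebra.norm_or_neg_norm_mem_spectrum hsa with h | h <;>
      rw [hnorm, spectrum.mem_iff] at h
    · by_contra hne
      refine h ?_
      convert isUnit_add_starProjection_orthogonal_singleton (sub_nonneg.2 ha1) he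
        (by rwa [sub_apply, one_apply_eq_self, sub_ne_zero, ne_comm]) using 1
      simp only [map_one]
      abel
    · refine absurd ?_ h
      have hu := CStarAlgebra.isUnit_of_le a (le_add_of_nonneg_right hP.one_sub_nonneg) ⟨ha, hua⟩
      convert hu.neg using 1
      simp only [map_neg, map_one]
      abel
  · intro hae
    refine le_antisymm (norm_le_one_of_neg_one_le_of_le_one hsa ?_ ?_) ?_
    · simpa using sub_le_sub ha hP.le_one
    · exact (sub_le_self a hP.nonneg).trans ha1
    · simpa [hae, hPe, he] using (a - P).le_opNorm e

theorem starProjection_le_iff_forall_mem_apply_eq_self {x : H →L[ℂ] H} (hx0 : 0 ≤ x)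
    (hx1 : x ≤ 1) (K : Submodule ℂ H) [K.HasOrthogonalProjection] :
    K.starProjection ≤ x ↔ ∀ v ∈ K, x v = v := by
  set P := K.starProjection
  constructor
  · intro hle v hv
    have hPv : P v = v := starProjection_eq_self_iff.mpr hv
    have h := ((nonneg_iff_isPositive _).mp (sub_nonneg.mpr hle)).re_inner_nonneg_left v
    have : (1 - x) v = 0 := by
      refine apply_eq_zero_of_re_inner_apply_self_le_zero (sub_nonneg.mpr hx1) ?_
      simp only [sub_apply, one_apply_eq_self, hPv, inner_sub_left, map_sub] at h ⊢
      linarith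
    rwa [sub_apply, one_apply_eq_self, sub_eq_zero, eq_comm] at this
  · intro h
    have hPsa : IsSelfAdjoint P := isSelfAdjoint_starProjection K
    have hxP : x * P = P := by
      ext v
      exact h _ (K.starProjection_apply_mem v)
    have hPx : P * x = P := by
      have := congrArg star hxP
      rwa [star_mul, hPsa.star_eq, (IsSelfAdjoint.of_nonneg hx0).star_eq] at this
    -- with `x P = P x = P`, the difference `x - P` is the compression `(1 - P) x (1 - P)`
    have hcomp : x - P = star (1 - P) * x * (1 - P) := by
      have hPP : P * P = P := K.isIdempotentElem_starProjection
      simp only [star_sub, star_one, hPsa.star_eq, sub_mul, mul_sub, one_mul, mul_one, hxP, hPx,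
        hPP]
      abel
    rw [← sub_nonneg, hcomp]
    exact star_left_conjugate_nonneg hx0 _

theorem forall_mem_norm_eq_one_apply_eq_self_iff {𝕜 E : Type*} [RCLike 𝕜] [NormedAddCommGroup E]
    [NormedSpace 𝕜 E] {f : E →L[𝕜] E} {K : Submodule 𝕜 E} :
    (∀ e ∈ K, ‖e‖ = 1 → f e = e) ↔ ∀ v ∈ K, f v = v := by
  refine ⟨fun h v hv ↦ ?_, fun h e he _ ↦ h e he⟩
  rcases eq_or_ne v 0 with rfl | hv0
  · exact map_zero f
  have hnorm : (‖v‖ : 𝕜) ≠ 0 := RCLike.ofReal_ne_zero.mpr (norm_ne_zero_iff.mpr hv0)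
  have := congrArg ((‖v‖ : 𝕜) • ·) (h _ (K.smul_mem _ hv) (norm_smul_inv_norm hv0))
  simpa only [map_smul, smul_smul, mul_inv_cancel₀ hnorm, one_smul] using this

theorem sph_sph_cominimal_iff_general (a x : H →L[ℂ] H)
    (ha : 0 ≤ a) (hua : IsUnit a) (hna : ‖a‖ = 1)
    (hx : 0 ≤ x) (hux : IsUnit x) (hnx : ‖x‖ = 1) :
    (∀ p : H →L[ℂ] H, IsIdempotentElem p → IsSelfAdjoint p →
        Module.finrank ℂ (LinearMap.range ((1 - p : H →L[ℂ] H) : H →ₗ[ℂ] H)) = 1 → ‖a - p‖ = 1 → ‖x - p‖ = 1) ↔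
      supportProjection a ≤ x := by
  have ha1 : a ≤ 1 := (CStarAlgebra.norm_le_one_iff_of_nonneg a ha).mp hna.le
  have hx1 : x ≤ 1 := (CStarAlgebra.norm_le_one_iff_of_nonneg x hx).mp hnx.le
  set K := LinearMap.ker ((a - 1 : H →L[ℂ] H) : H →ₗ[ℂ] H)
  have : CompleteSpace K := (isClosed_ker (a - 1)).completeSpace_coe
  have hK : ∀ e, e ∈ K ↔ a e = e := fun e ↦ by
    rw [LinearMap.mem_ker, coe_coe, sub_apply, one_apply_eq_self, sub_eq_zero]
  change _ ↔ K.starProjection ≤ x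
  rw [starProjection_le_iff_forall_mem_apply_eq_self hx hx1,
    ← forall_mem_norm_eq_one_apply_eq_self_iff]
  calc _ ↔ ∀ e : H, ‖e‖ = 1 →
        ‖a - (ℂ ∙ e)ᗮ.starProjection‖ = 1 → ‖x - (ℂ ∙ e)ᗮ.starProjection‖ = 1 := by
        refine ⟨fun h e he ↦ ?_, fun h p hidem hsa hrank ↦ ?_⟩
        · obtain ⟨hidem, hsa, hrank⟩ := isCominimalProjection_iff.mpr ⟨e, he, rfl⟩
          exact h _ hidem hsa hrank
        · obtain ⟨e, he, rfl⟩ := isCominimalProjection_iff.mp ⟨hidem, hsa, hrank⟩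
          exact h e he
    _ ↔ ∀ e : H, ‖e‖ = 1 → a e = e → x e = e := by
        refine forall₂_congr fun e he ↦ ?_
        rw [norm_sub_starProjection_orthogonal_singleton_eq_one_iff ha hua ha1 he,
          norm_sub_starProjection_orthogonal_singleton_eq_one_iff hx hux hx1 he]
    _ ↔ ∀ e ∈ K, ‖e‖ = 1 → x e = e := by
        simp only [hK]
        exact forall_congr' fun e ↦ imp.swap

/-- Let `H` be infinite-dimensional and `a ∈ B(H)` positive invertible with `‖a‖ = 1` and
`s(a) ≠ 0`.  A positive invertible `x` with `‖x‖ = 1` satisfies `‖x - p‖ = 1` for every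
co-minimal projection `p` with `‖a - p‖ = 1` iff `s(a) ≤ x`. -/
theorem sph_sph_cominimal_iff (hinf : ¬ FiniteDimensional ℂ H) (a x : H →L[ℂ] H)
    (ha : 0 ≤ a) (hua : IsUnit a) (hna : ‖a‖ = 1) (hs : supportProjection a ≠ 0)
    (hx : 0 ≤ x) (hux : IsUnit x) (hnx : ‖x‖ = 1) :
    (∀ p : H →L[ℂ] H, IsIdempotentElem p → IsSelfAdjoint p →
        Module.finrank ℂ (LinearMap.range ((1 - p : H →L[ℂ] H) : H →ₗ[ℂ] H)) = 1 → ‖a - p‖ = 1 → ‖x - p‖ = 1) ↔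
      supportProjection a ≤ x :=
  sph_sph_cominimal_iff_general a x ha hua hna hx hux hnx
end

section
/- Let M and N be von Neumann algebras and Δ : S(M⁺) → S(N⁺) a surjective isometry that maps nonzero projections to nonzero projections bijectively. Then Δ(1) = 1, i.e., Δ maps the unit of M to the unit of N. -/
/-!
If `q = Δ 1` were a projection other than `1`, then `1 - q` would be a nonzero projection, so
`1 - q = Δ x` for some `x ∈ S(M⁺)`. The midpoint `w` of `1` and `x` lies in `S(M⁺)` and is within
`1/2` of both, so `Δ w` is within `1/2` of both `q` and `1 - q`. With the symmetry `u = 2q - 1`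
and `b = 2 Δ w - 1` this says `‖b - u‖ ≤ 1` and `‖b + u‖ ≤ 1`, and the C⋆-parallelogram law
`star (b - u) * (b - u) + star (b + u) * (b + u) = 2 (star b * b + 1)` then forces `b = 0`,
i.e. `‖Δ w‖ = 1/2`, although `Δ w ∈ S(N⁺)`.
-/

theorem IsStarProjection.norm_eq_one {E : Type*} [NonUnitalNormedRing E] [StarRing E]
    [CStarRing E] {p : E} (hp : IsStarProjection p) (hp₀ : p ≠ 0) : ‖p‖ = 1 := by
  have h : ‖p‖ * ‖p‖ = ‖p‖ := by
    rw [← CStarRing.norm_star_mul_self, hp.isSelfAdjoint.star_eq, hp.isIdempotentElem.eq]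
  exact (mul_eq_right₀ (norm_ne_zero_iff.mpr hp₀)).mp h

section CStarAlgebra

variable {A : Type*} [CStarAlgebra A] [PartialOrder A] [StarOrderedRing A]

theorem star_mul_self_le_one_of_norm_le_one {c : A} (hc : ‖c‖ ≤ 1) : star c * c ≤ 1 := by
  rw [← CStarAlgebra.norm_le_one_iff_of_nonneg _ (star_mul_self_nonneg c),
    CStarRing.norm_star_mul_self]
  exact mul_le_one₀ hc (norm_nonneg c) hc

theorem eq_zero_of_norm_sub_le_one_of_norm_add_le_one {u b : A} (hu : u ∈ unitary A)
    (h₁ : ‖b - u‖ ≤ 1) (h₂ : ‖b + u‖ ≤ 1) : b = 0 := by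
  have parallelogram : star (b - u) * (b - u) + star (b + u) * (b + u) =
      star b * b + star b * b + 2 := by
    rw [← one_add_one_eq_two, ← Unitary.star_mul_self_of_mem hu, star_sub, star_add]
    noncomm_ring
  have hsum : star b * b + star b * b + 2 ≤ 2 := by
    rw [← parallelogram, ← one_add_one_eq_two]
    exact add_le_add (star_mul_self_le_one_of_norm_le_one h₁)
      (star_mul_self_le_one_of_norm_le_one h₂)
  have hb : star b * b ≤ 0 := calc
    star b * b ≤ star b * b + star b * b := le_add_of_nonneg_right (star_mul_self_nonneg b)
    _ ≤ 0 := by simpa using hsum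
  exact (CStarRing.star_mul_self_eq_zero_iff b).mp (le_antisymm hb (star_mul_self_nonneg b))

theorem IsStarProjection.two_mul_eq_one_of_norm_sub_le_half {p m : A} (hp : IsStarProjection p)
    (h₁ : ‖m - p‖ ≤ 1 / 2) (h₂ : ‖m - (1 - p)‖ ≤ 1 / 2) : 2 * m = 1 := by
  refine sub_eq_zero.mp <|
    eq_zero_of_norm_sub_le_one_of_norm_add_le_one hp.two_mul_sub_one_mem_unitary ?_ ?_
  · rw [show 2 * m - 1 - (2 * p - 1) = (2 : ℝ) • (m - p) by rw [two_smul]; noncomm_ring,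
      norm_smul]
    norm_num
    linarith
  · rw [show 2 * m - 1 + (2 * p - 1) = (2 : ℝ) • (m - (1 - p)) by rw [two_smul]; noncomm_ring,
      norm_smul]
    norm_num
    linarith

theorem dist_midpoint_one_le_half {x : A} (hx₀ : 0 ≤ x) (hx₁ : ‖x‖ ≤ 1) :
    dist (midpoint ℝ 1 x) 1 ≤ 1 / 2 ∧ dist (midpoint ℝ 1 x) x ≤ 1 / 2 := by
  have hx : x ≤ 1 := (CStarAlgebra.norm_le_one_iff_of_nonneg x).mp hx₁
  have h : dist (1 : A) x ≤ 1 := by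
    rw [dist_eq_norm]
    exact (CStarAlgebra.norm_le_one_iff_of_nonneg _ (sub_nonneg.mpr hx)).mpr (sub_le_self 1 hx₀)
  rw [dist_midpoint_left, dist_midpoint_right]
  constructor <;> norm_num <;> linarith

/-- The set `S(S⁺)` of the paper. -/
def positiveUnitSphere (S : StarSubalgebra ℂ A) : Set A := {x | x ∈ S ∧ 0 ≤ x ∧ ‖x‖ = 1}

variable {S : StarSubalgebra ℂ A}

theorem one_mem_positiveUnitSphere [Nontrivial A] : (1 : A) ∈ positiveUnitSphere S :=
  ⟨one_mem S, zero_le_one, CStarRing.norm_one⟩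

theorem IsStarProjection.mem_positiveUnitSphere {p : A} (hp : IsStarProjection p) (hpS : p ∈ S)
    (hp₀ : p ≠ 0) : p ∈ positiveUnitSphere S :=
  ⟨hpS, hp.nonneg, hp.norm_eq_one hp₀⟩

theorem midpoint_one_mem_positiveUnitSphere {x : A} (hx : x ∈ positiveUnitSphere S) :
    midpoint ℝ 1 x ∈ positiveUnitSphere S := by
  obtain ⟨hxS, hx₀, hx₁⟩ := hx
  have hx : x ∈ Set.Icc 0 1 := ⟨hx₀, (CStarAlgebra.norm_le_one_iff_of_nonneg x).mp hx₁.le⟩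
  have hw : midpoint ℝ 1 x ∈ Set.Icc 0 1 :=
    (convex_Icc 0 1).midpoint_mem ⟨zero_le_one, le_rfl⟩ hx
  have hxw : x ≤ midpoint ℝ 1 x := by
    rw [← sub_nonneg, midpoint_sub_right]
    exact smul_nonneg (by norm_num) (sub_nonneg.mpr hx.2)
  refine ⟨?_, hw.1, le_antisymm ?_ ?_⟩
  · rw [midpoint_eq_smul_add, ← algebraMap_smul ℂ]
    exact S.smul_mem (add_mem (one_mem S) hxS) _
  · exact (CStarAlgebra.norm_le_one_iff_of_nonneg _ hw.1).mpr hw.2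
  · exact hx₁ ▸ CStarAlgebra.norm_le_norm_of_nonneg_of_le hx₀ hxw

end CStarAlgebra

/-- A surjective isometry between the sets of positive norm-one elements of two
von Neumann algebras that maps the nonzero projections bijectively onto the nonzero
projections sends the unit to the unit. -/
theorem delta_one_eq_one {H K : Type*} [NormedAddCommGroup H] [InnerProductSpace ℂ H]
    [CompleteSpace H] [NormedAddCommGroup K] [InnerProductSpace ℂ K] [CompleteSpace K]
    (M : VonNeumannAlgebra H) (N : VonNeumannAlgebra K)
    (Δ : (H →L[ℂ] H) → (K →L[ℂ] K))
    (hbij : Set.BijOn Δ {x | x ∈ M ∧ 0 ≤ x ∧ ‖x‖ = 1} {y | y ∈ N ∧ 0 ≤ y ∧ ‖y‖ = 1})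
    (hiso : ∀ x ∈ {x | x ∈ M ∧ 0 ≤ x ∧ ‖x‖ = 1}, ∀ y ∈ {x | x ∈ M ∧ 0 ≤ x ∧ ‖x‖ = 1},
      ‖Δ x - Δ y‖ = ‖x - y‖)
    (hproj : Δ '' {p | p ∈ M ∧ IsIdempotentElem p ∧ IsSelfAdjoint p ∧ p ≠ 0} =
      {q | q ∈ N ∧ IsIdempotentElem q ∧ IsSelfAdjoint q ∧ q ≠ 0}) :
    Δ 1 = 1 := by
  obtain hK | hK := subsingleton_or_nontrivial (K →L[ℂ] K)
  · exact Subsingleton.elim _ _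
  obtain ⟨e, ⟨-, -, he⟩, -⟩ := hbij.surjOn (one_mem_positiveUnitSphere (S := N.toStarSubalgebra))
  have : Nontrivial (H →L[ℂ] H) := nontrivial_of_ne e 0 (norm_ne_zero_iff.mp (by simp [he]))
  obtain ⟨hqN, hq_idem, hq_sa, -⟩ :
      Δ 1 ∈ {q | q ∈ N ∧ IsIdempotentElem q ∧ IsSelfAdjoint q ∧ q ≠ 0} :=
    hproj ▸ Set.mem_image_of_mem Δ ⟨one_mem M, .one, .one _, one_ne_zero⟩
  have hq : IsStarProjection (Δ 1) := ⟨hq_idem, hq_sa⟩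
  by_contra hq₁
  obtain ⟨x, hx, hΔx⟩ := hbij.surjOn <| hq.one_sub.mem_positiveUnitSphere
    (S := N.toStarSubalgebra) (sub_mem (one_mem N) hqN) (sub_ne_zero.mpr (Ne.symm hq₁))
  have h1 : (1 : H →L[ℂ] H) ∈ positiveUnitSphere M.toStarSubalgebra := one_mem_positiveUnitSphere
  have hw := midpoint_one_mem_positiveUnitSphere hx
  obtain ⟨hw₁, hwx⟩ := dist_midpoint_one_le_half hx.2.1 hx.2.2.le
  have hm := hq.two_mul_eq_one_of_norm_sub_le_half (m := Δ (midpoint ℝ 1 x))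
    (by rwa [hiso _ hw _ h1, ← dist_eq_norm]) (by rwa [← hΔx, hiso _ hw _ hx, ← dist_eq_norm])
  have h2 := congrArg norm hm
  rw [two_mul, ← two_smul ℝ, norm_smul, (hbij.mapsTo hw).2.2, CStarRing.norm_one] at h2
  norm_num at h2
end

section
/- Let H be a complex Hilbert space and T : B(H) → B(H) a bounded linear map that maps nonzero projections to nonzero projections and preserves orthogonality of projections (T(p)T(q) = 0 whenever pq = 0), with T(p)* = T(p) for all projections p. Then T(b²) = T(b)² and T(b)* = T(b) for every self-adjoint b ∈ B(H), i.e., T is a Jordan *-homomorphism on self-adjoint elements. -/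
/-!
Every self-adjoint `b ∈ B(H)` is a norm limit of real combinations `∑ tᵢ pᵢ` of mutually
orthogonal projections. Take the spectral projections `E τ` onto `ker (b - τ)⁺` at a grid
`τ₀ < τ₁ < ⋯ < τ_N` of mesh `ε` running from below to above the spectrum; the differences
`pᵢ = E τᵢ₊₁ - E τᵢ` commute with `b` and satisfy `τᵢ pᵢ ≤ b pᵢ ≤ τᵢ₊₁ pᵢ`, so that
`0 ≤ b - ∑ τᵢ pᵢ ≤ ε`. The images `T pᵢ` are again mutually orthogonal self-adjoint idempotents,
so `T` is multiplicative and self-adjoint on such combinations, and both properties pass to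
norm limits because `T` is continuous.
-/

open Finset

theorem OrthogonalIdempotents.sum_smul_mul_sum_smul {R A I : Type*} [CommSemiring R]
    [Semiring A] [Algebra R A] {e : I → A} (he : OrthogonalIdempotents e) (s : Finset I)
    (t u : I → R) :
    (∑ i ∈ s, t i • e i) * (∑ i ∈ s, u i • e i) = ∑ i ∈ s, (t i * u i) • e i := by
  classical
  simp [sum_mul, mul_sum, he.mul_eq, smul_smul, mul_comm]

theorem OrthogonalIdempotents.map_mul_self_sum_smul {R A B I : Type*} [CommSemiring R]
    [Semiring A] [Semiring B] [Algebra R A] [Algebra R B] {p : I → A}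
    (hp : OrthogonalIdempotents p) (T : A →ₗ[R] B) (hTp : OrthogonalIdempotents (T ∘ p))
    (s : Finset I) (t : I → R) :
    T ((∑ i ∈ s, t i • p i) * (∑ i ∈ s, t i • p i))
      = T (∑ i ∈ s, t i • p i) * T (∑ i ∈ s, t i • p i) := by
  simp only [hp.sum_smul_mul_sum_smul, map_sum, map_smul]
  exact (hTp.sum_smul_mul_sum_smul s t t).symm

section CStarAlgebra

variable {A : Type*} [CStarAlgebra A]

theorem posPart_sub_algebraMap_eq_cfc {b : A} (hb : IsSelfAdjoint b) (τ : ℝ) :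
    (b - algebraMap ℝ A τ)⁺ = cfc (fun s => (s - τ)⁺) b := by
  have : b - algebraMap ℝ A τ = cfc (fun s => s - τ) b := by
    rw [cfc_sub _ _ b, cfc_id' ℝ b, cfc_const τ b]
  rw [this, CFC.posPart_def, cfcₙ_eq_cfc, ← cfc_comp' (·⁺) (fun s => s - τ) b]

variable [PartialOrder A] [StarOrderedRing A]

theorem IsStarProjection.nonneg_mul_of_commute {x e q : A} (hq : IsStarProjection q)
    (hxq : Commute x q) (hx : 0 ≤ x * e) (heq : e * q = q) : 0 ≤ x * q := by
  have : x * q = star q * (x * e) * q := by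
    rw [hq.isSelfAdjoint.star_eq, mul_assoc, mul_assoc, heq, ← mul_assoc, ← hxq.eq, mul_assoc,
      hq.isIdempotentElem.eq]
  exact this ▸ star_left_conjugate_nonneg hx q

theorem orthogonalIdempotents_sub_succ_of_monotone {F : ℕ → A}
    (hF : ∀ n, IsStarProjection (F n)) (hmono : Monotone F) :
    OrthogonalIdempotents fun n => F (n + 1) - F n := by
  have hleft {i j} (h : i ≤ j) : F i * F j = F i :=
    ((hF i).le_iff_mul_eq_left (hF j)).1 (hmono h)
  have hright {i j} (h : i ≤ j) : F j * F i = F i :=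
    ((hF i).le_iff_mul_eq_right (hF j)).1 (hmono h)
  refine ⟨fun n => ((hF n).le_iff_idempotent_sub (hF (n + 1))).1 (hmono n.le_succ), ?_⟩
  intro i j hij
  rcases hij.lt_or_gt with h | h
  · simp only [sub_mul, mul_sub, hleft h, hleft (Nat.le_succ_of_le h.le), hleft h.le,
      hleft (Nat.succ_le_succ h.le), sub_self]
  · simp only [sub_mul, mul_sub, hright h, hright (Nat.le_succ_of_le h.le), hright h.le,
      hright (Nat.succ_le_succ h.le), sub_self]

theorem norm_sub_sum_smul_le_of_nonneg_mul {ι : Type*} (s : Finset ι) {b : A} {p : ι → A}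
    {t : ι → ℝ} {ε : ℝ} (hε : 0 ≤ ε) (hp : ∑ i ∈ s, p i = 1)
    (hlow : ∀ i ∈ s, 0 ≤ (b - algebraMap ℝ A (t i)) * p i)
    (hhigh : ∀ i ∈ s, 0 ≤ (algebraMap ℝ A (t i + ε) - b) * p i) :
    ‖b - ∑ i ∈ s, t i • p i‖ ≤ ε := by
  have hlow' : ∑ i ∈ s, (b - algebraMap ℝ A (t i)) * p i = b - ∑ i ∈ s, t i • p i := by
    simp only [sub_mul, sum_sub_distrib, ← mul_sum, hp, mul_one, ← Algebra.smul_def]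
  have hhigh' : ∑ i ∈ s, (algebraMap ℝ A (t i + ε) - b) * p i
      = algebraMap ℝ A ε - (b - ∑ i ∈ s, t i • p i) := by
    have (i : ι) : (algebraMap ℝ A (t i + ε) - b) * p i
        = algebraMap ℝ A ε * p i - (b - algebraMap ℝ A (t i)) * p i := by
      rw [map_add]; noncomm_ring
    simp only [this, sum_sub_distrib, ← mul_sum, hp, mul_one, hlow']
  have h0 : 0 ≤ b - ∑ i ∈ s, t i • p i := hlow' ▸ sum_nonneg hlow
  exact (CStarAlgebra.norm_le_iff_le_algebraMap _ hε h0).2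
    (sub_nonneg.1 (hhigh' ▸ sum_nonneg hhigh))

end CStarAlgebra

section SpectralProjection

variable {H : Type*} [NormedAddCommGroup H] [InnerProductSpace ℂ H] [CompleteSpace H]

/-- The spectral projection `𝟙_{(-∞, τ]}(b)`. -/
noncomputable def spectralProjIic (b : H →L[ℂ] H) (τ : ℝ) : H →L[ℂ] H :=
  (b - algebraMap ℝ (H →L[ℂ] H) τ)⁺.ker.starProjection

variable {b : H →L[ℂ] H} {τ τ' : ℝ}

theorem isStarProjection_spectralProjIic (b : H →L[ℂ] H) (τ : ℝ) :
    IsStarProjection (spectralProjIic b τ) :=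
  isStarProjection_starProjection

theorem posPart_mul_spectralProjIic :
    (b - algebraMap ℝ _ τ)⁺ * spectralProjIic b τ = 0 := by
  ext x
  exact Submodule.starProjection_apply_mem (b - algebraMap ℝ _ τ)⁺.ker x

theorem spectralProjIic_mul_negPart :
    spectralProjIic b τ * (b - algebraMap ℝ _ τ)⁻ = (b - algebraMap ℝ _ τ)⁻ := by
  ext x
  refine Submodule.starProjection_eq_self_iff.2 ?_
  change ((b - algebraMap ℝ _ τ)⁺ * (b - algebraMap ℝ _ τ)⁻) x = 0
  rw [CFC.posPart_mul_negPart, zero_apply]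

theorem sub_algebraMap_mul_spectralProjIic (hb : IsSelfAdjoint b) :
    (b - algebraMap ℝ _ τ) * spectralProjIic b τ = -(b - algebraMap ℝ _ τ)⁻ := by
  have h := congr(star $(spectralProjIic_mul_negPart (b := b) (τ := τ)))
  rw [star_mul, (isStarProjection_spectralProjIic b τ).isSelfAdjoint.star_eq,
    (CFC.negPart_nonneg _).isSelfAdjoint.star_eq] at h
  nth_rw 1 [← CFC.posPart_sub_negPart _ (hb.sub (.algebraMap _ (.all τ)))]
  rw [sub_mul, posPart_mul_spectralProjIic, h, zero_sub]

theorem spectralProjIic_mul_sub_algebraMap (hb : IsSelfAdjoint b) :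
    spectralProjIic b τ * (b - algebraMap ℝ _ τ) = -(b - algebraMap ℝ _ τ)⁻ := by
  have h := congr(star $(posPart_mul_spectralProjIic (b := b) (τ := τ)))
  rw [star_mul, (isStarProjection_spectralProjIic b τ).isSelfAdjoint.star_eq,
    (CFC.posPart_nonneg _).isSelfAdjoint.star_eq, star_zero] at h
  nth_rw 1 [← CFC.posPart_sub_negPart _ (hb.sub (.algebraMap _ (.all τ)))]
  rw [mul_sub, h, spectralProjIic_mul_negPart, zero_sub]

theorem commute_spectralProjIic (hb : IsSelfAdjoint b) : Commute b (spectralProjIic b τ) := by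
  have h : Commute (b - algebraMap ℝ _ τ) (spectralProjIic b τ) :=
    (sub_algebraMap_mul_spectralProjIic hb).trans (spectralProjIic_mul_sub_algebraMap hb).symm
  simpa using h.add_left (Algebra.commutes τ (spectralProjIic b τ))

theorem ker_posPart_sub_algebraMap_mono (hb : IsSelfAdjoint b) (h : τ ≤ τ') :
    (b - algebraMap ℝ _ τ)⁺.ker ≤ (b - algebraMap ℝ (H →L[ℂ] H) τ')⁺.ker := by
  rcases h.eq_or_lt with rfl | hlt
  · exact le_rfl
  set g : ℝ → ℝ := fun s => (s - τ')⁺ / max (s - τ) (τ' - τ)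
  have hfac : (b - algebraMap ℝ _ τ')⁺ = cfc g b * (b - algebraMap ℝ _ τ)⁺ := by
    have hg : Continuous g :=
      (continuous_posPart.comp (continuous_sub_right τ')).div
        ((continuous_sub_right τ).max continuous_const)
        fun s => (sub_pos.2 hlt).trans_le (le_max_right _ _) |>.ne'
    rw [posPart_sub_algebraMap_eq_cfc hb, posPart_sub_algebraMap_eq_cfc hb, ← cfc_mul _ _ b]
    refine cfc_congr fun s _ => ?_
    rcases le_or_gt s τ' with hs | hs
    · simp [g, posPart_eq_zero.2 (sub_nonpos.2 hs)]
    · have hsτ : 0 < s - τ := by linarith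
      simp [g, posPart_eq_self.2 hsτ.le, posPart_eq_self.2 (sub_pos.2 hs).le,
        max_eq_left (by linarith : τ' - τ ≤ s - τ), hsτ.ne']
  intro x hx
  simp only [LinearMap.mem_ker, ContinuousLinearMap.coe_coe] at hx ⊢
  rw [hfac, mul_apply_eq_comp]
  simp [hx]

theorem spectralProjIic_mono (hb : IsSelfAdjoint b) : Monotone (spectralProjIic b) :=
  fun _ _ h => Submodule.starProjection_le_starProjection_iff.2
    (ker_posPart_sub_algebraMap_mono hb h)

theorem spectralProjIic_eq_one_of_le (hb : IsSelfAdjoint b) (h : b ≤ algebraMap ℝ _ τ) :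
    spectralProjIic b τ = 1 := by
  have h0 : (b - algebraMap ℝ _ τ)⁺ = 0 :=
    (CFC.posPart_eq_zero_iff _ (hb.sub (.algebraMap _ (.all τ)))).2 (sub_nonpos.2 h)
  ext x
  exact Submodule.starProjection_eq_self_iff.2 (by simp [h0])

theorem spectralProjIic_eq_zero_of_lt_neg_norm (hb : IsSelfAdjoint b) (hτ : τ < -‖b‖) :
    spectralProjIic b τ = 0 := by
  have hpos : IsStrictlyPositive (b - algebraMap ℝ _ τ) := by
    refine (isStrictlyPositive_algebraMap (sub_pos.2 hτ)).of_le ?_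
    rw [map_sub, map_neg]
    exact sub_le_sub_right hb.neg_algebraMap_norm_le_self _
  rw [← hpos.isUnit.mul_right_eq_zero, ← (CFC.posPart_eq_self _).2 hpos.nonneg]
  exact posPart_mul_spectralProjIic

theorem sub_algebraMap_mul_sub_spectralProjIic_nonneg (hb : IsSelfAdjoint b) (h : τ ≤ τ') :
    0 ≤ (b - algebraMap ℝ _ τ) * (spectralProjIic b τ' - spectralProjIic b τ) := by
  have hτ := isStarProjection_spectralProjIic b τ
  have hτ' := isStarProjection_spectralProjIic b τ'
  have hle := spectralProjIic_mono hb h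
  refine ((hτ.le_iff_sub hτ').1 hle).nonneg_mul_of_commute (e := 1 - spectralProjIic b τ)
    ?_ ?_ ?_
  · exact ((commute_spectralProjIic hb).sub_right (commute_spectralProjIic hb)).sub_left
      (Algebra.commute_algebraMap_left τ _)
  · rw [mul_sub, mul_one, sub_algebraMap_mul_spectralProjIic hb, sub_neg_eq_add,
      ← eq_add_of_sub_eq (CFC.posPart_sub_negPart _ (hb.sub (.algebraMap _ (.all τ))))]
    exact CFC.posPart_nonneg _
  · rw [sub_mul, one_mul, mul_sub, hτ.isIdempotentElem.eq, (hτ.le_iff_mul_eq_left hτ').1 hle,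
      sub_self, sub_zero]

theorem algebraMap_sub_mul_sub_spectralProjIic_nonneg (hb : IsSelfAdjoint b) (h : τ ≤ τ') :
    0 ≤ (algebraMap ℝ _ τ' - b) * (spectralProjIic b τ' - spectralProjIic b τ) := by
  have hτ := isStarProjection_spectralProjIic b τ
  have hτ' := isStarProjection_spectralProjIic b τ'
  have hle := spectralProjIic_mono hb h
  refine ((hτ.le_iff_sub hτ').1 hle).nonneg_mul_of_commute (e := spectralProjIic b τ') ?_ ?_ ?_
  · exact (Algebra.commute_algebraMap_left τ' _).sub_left
      ((commute_spectralProjIic hb).sub_right (commute_spectralProjIic hb))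
  · rw [← neg_sub, neg_mul, sub_algebraMap_mul_spectralProjIic hb, neg_neg]
    exact CFC.negPart_nonneg _
  · rw [mul_sub, hτ'.isIdempotentElem.eq, (hτ.le_iff_mul_eq_right hτ').1 hle]

theorem exists_norm_sub_sum_smul_le (hb : IsSelfAdjoint b) {ε : ℝ} (hε : 0 < ε) :
    ∃ (N : ℕ) (p : ℕ → H →L[ℂ] H) (t : ℕ → ℝ), (∀ i, IsSelfAdjoint (p i)) ∧
      OrthogonalIdempotents p ∧ ‖b - ∑ i ∈ range N, t i • p i‖ ≤ ε := by
  set t : ℕ → ℝ := fun i => -‖b‖ - ε + i * ε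
  have ht : Monotone t := fun i j hij => by
    have : (i : ℝ) ≤ j := Nat.cast_le.2 hij
    simp only [t]; nlinarith
  obtain ⟨N, hN⟩ := exists_nat_ge ((2 * ‖b‖ + ε) / ε)
  have htN : ‖b‖ ≤ t N := by
    have := (div_le_iff₀ hε).1 hN
    simp only [t]; linarith
  set F : ℕ → H →L[ℂ] H := fun i => spectralProjIic b (t i)
  have hF (i : ℕ) : IsStarProjection (F i) := isStarProjection_spectralProjIic b (t i)
  refine ⟨N, fun i => F (i + 1) - F i, t,
    fun i => (hF (i + 1)).isSelfAdjoint.sub (hF i).isSelfAdjoint,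
    orthogonalIdempotents_sub_succ_of_monotone hF ((spectralProjIic_mono hb).comp ht), ?_⟩
  refine norm_sub_sum_smul_le_of_nonneg_mul _ hε.le ?_ ?_ ?_
  · rw [sum_range_sub]
    show spectralProjIic b (t N) - spectralProjIic b (t 0) = 1
    rw [spectralProjIic_eq_one_of_le hb
        (hb.le_algebraMap_norm_self.trans (algebraMap_mono _ htN)),
      spectralProjIic_eq_zero_of_lt_neg_norm hb (by simp [t, hε]), sub_zero]
  · exact fun i _ => sub_algebraMap_mul_sub_spectralProjIic_nonneg hb (ht i.le_succ)
  · intro i _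
    have : t i + ε = t (i + 1) := by simp only [t]; push_cast; ring
    exact this ▸ algebraMap_sub_mul_sub_spectralProjIic_nonneg hb (ht i.le_succ)

end SpectralProjection

theorem jordan_on_selfadjoint_general {H : Type*} [NormedAddCommGroup H] [InnerProductSpace ℂ H]
    [CompleteSpace H] (T : (H →L[ℂ] H) →L[ℂ] (H →L[ℂ] H))
    (hproj : ∀ p : H →L[ℂ] H, IsIdempotentElem p → IsSelfAdjoint p → p ≠ 0 →
      IsIdempotentElem (T p) ∧ IsSelfAdjoint (T p) ∧ T p ≠ 0)
    (horth : ∀ p q : H →L[ℂ] H, IsIdempotentElem p → IsSelfAdjoint p →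
      IsIdempotentElem q → IsSelfAdjoint q → p * q = 0 → T p * T q = 0) :
    ∀ b : H →L[ℂ] H, IsSelfAdjoint b → T (b * b) = T b * T b ∧ IsSelfAdjoint (T b) := by
  have hTproj (p : H →L[ℂ] H) (hp : IsStarProjection p) : IsStarProjection (T p) := by
    rcases eq_or_ne p 0 with rfl | hp0
    · rw [map_zero]; exact .zero _
    · obtain ⟨hidem, hsa, -⟩ := hproj p hp.isIdempotentElem hp.isSelfAdjoint hp0
      exact ⟨hidem, hsa⟩
  have hclosed : IsClosed {x | T (x * x) = T x * T x ∧ IsSelfAdjoint (T x)} :=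
    (isClosed_eq (T.continuous.comp (continuous_id.mul continuous_id))
      (T.continuous.mul T.continuous)).inter
      (isClosed_eq (continuous_star.comp T.continuous) T.continuous)
  intro b hb
  refine hclosed.closure_subset (Metric.mem_closure_iff.2 fun ε hε => ?_)
  obtain ⟨N, p, t, hpsa, hp, hbp⟩ := exists_norm_sub_sum_smul_le hb (half_pos hε)
  have hpproj (i : ℕ) : IsStarProjection (p i) := ⟨hp.idem i, hpsa i⟩
  have hTp : OrthogonalIdempotents (T ∘ p) :=
    ⟨fun i => (hTproj _ (hpproj i)).isIdempotentElem, fun i j hij =>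
      horth _ _ (hp.idem i) (hpsa i) (hp.idem j) (hpsa j) (hp.ortho hij)⟩
  refine ⟨∑ i ∈ range N, t i • p i,
    ⟨hp.map_mul_self_sum_smul (T.toLinearMap.restrictScalars ℝ) hTp _ t, ?_⟩, ?_⟩
  · simp only [map_sum, ContinuousLinearMap.map_smul_of_tower]
    exact isSelfAdjoint_sum _ fun i _ =>
      (IsSelfAdjoint.all (t i)).smul (hTproj _ (hpproj i)).isSelfAdjoint
  · rw [dist_eq_norm]; linarith

/-- A bounded linear map on `B(H)` mapping nonzero projections to nonzero projections,
preserving orthogonality of projections and adjoints of projections, is a Jordan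
*-homomorphism on self-adjoint elements: `T(b²) = T(b)²` and `T(b)* = T(b)`. -/
theorem jordan_on_selfadjoint {H : Type*} [NormedAddCommGroup H] [InnerProductSpace ℂ H]
    [CompleteSpace H] (T : (H →L[ℂ] H) →L[ℂ] (H →L[ℂ] H))
    (hproj : ∀ p : H →L[ℂ] H, IsIdempotentElem p → IsSelfAdjoint p → p ≠ 0 →
      IsIdempotentElem (T p) ∧ IsSelfAdjoint (T p) ∧ T p ≠ 0)
    (hstar : ∀ p : H →L[ℂ] H, IsIdempotentElem p → IsSelfAdjoint p → star (T p) = T p)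
    (horth : ∀ p q : H →L[ℂ] H, IsIdempotentElem p → IsSelfAdjoint p →
      IsIdempotentElem q → IsSelfAdjoint q → p * q = 0 → T p * T q = 0) :
    ∀ b : H →L[ℂ] H, IsSelfAdjoint b → T (b * b) = T b * T b ∧ IsSelfAdjoint (T b) :=
  jordan_on_selfadjoint_general T hproj horth
end

section
/- Let e and v be two distinct rank-one projections on a complex Hilbert space H with ‖e − v‖ = 1. Then e and v are orthogonal, i.e., ev = 0. -/
/-!
A rank-one projection is `P_x = ⟪x, ·⟫ x` for a unit vector `x`. For unit vectors `x, y`, the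
self-adjoint operator `d = P_x - P_y` satisfies `d³ = (1 - |⟪x, y⟫|²) d`, and the C⋆-identity
`‖d²‖ = ‖d‖²` turns this into `‖P_x - P_y‖² = 1 - |⟪x, y⟫|²`. Distance one therefore forces
`⟪x, y⟫ = 0`, whence `P_x P_y = ⟪x, y⟫ ⟪y, ·⟫ x = 0`.
-/

open InnerProductSpace

theorem Submodule.exists_norm_eq_one_eq_span_singleton_of_finrank_eq_one {𝕜 E : Type*}
    [RCLike 𝕜] [NormedAddCommGroup E] [InnerProductSpace 𝕜 E] {K : Submodule 𝕜 E}
    (hK : Module.finrank 𝕜 K = 1) : ∃ x : E, ‖x‖ = 1 ∧ K = 𝕜 ∙ x := by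
  obtain ⟨w, hw, -⟩ := finrank_eq_one_iff'.mp hK
  have hw : (w : E) ≠ 0 := by simpa using hw
  have hx := norm_smul_inv_norm (𝕜 := 𝕜) hw
  exact ⟨_, hx, eq_span_singleton_of_mem_of_finrank_eq_one hK (K.smul_mem _ w.2)
    (norm_ne_zero_iff.mp (by simp [hx]))⟩

theorem IsSelfAdjoint.norm_sq_eq_norm_of_mul_mul_self_eq_smul {𝕜 A : Type*} [NormedField 𝕜]
    [NonUnitalNormedRing A] [StarRing A] [CStarRing A] [NormedSpace 𝕜 A] [IsScalarTower 𝕜 A A]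
    {a : A} (ha : IsSelfAdjoint a) (ha0 : a ≠ 0) {t : 𝕜} (hat : a * a * a = t • a) :
    ‖a‖ ^ 2 = ‖t‖ := by
  have hsq : a * a * (a * a) = t • (a * a) := by rw [← mul_assoc, hat, smul_mul_assoc]
  have haa : IsSelfAdjoint (a * a) := by
    simpa [ha.star_eq] using IsSelfAdjoint.star_mul_self a
  have key : ‖a‖ ^ 2 * ‖a‖ ^ 2 = ‖t‖ * ‖a‖ ^ 2 := by
    rw [← ha.norm_mul_self, ← sq, ← haa.norm_mul_self, hsq, norm_smul]
  exact mul_right_cancel₀ (by positivity) key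

namespace InnerProductSpace

variable {𝕜 E : Type*} [RCLike 𝕜] [NormedAddCommGroup E] [InnerProductSpace 𝕜 E]

theorem _root_.IsStarProjection.exists_eq_rankOne_self_of_finrank_range_eq_one [CompleteSpace E]
    {p : E →L[𝕜] E} (hp : IsStarProjection p)
    (hrank : Module.finrank 𝕜 (LinearMap.range (p : E →ₗ[𝕜] E)) = 1) :
    ∃ x : E, ‖x‖ = 1 ∧ p = rankOne 𝕜 x x := by
  obtain ⟨x, hx, hrange⟩ :=
    Submodule.exists_norm_eq_one_eq_span_singleton_of_finrank_eq_one hrank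
  obtain ⟨_, hp⟩ := isStarProjection_iff_eq_starProjection_range.mp hp
  refine ⟨x, hx, ContinuousLinearMap.ext fun z => ?_⟩
  rw [hp]
  simp only [hrange, Submodule.starProjection_unit_singleton 𝕜 hx, rankOne_apply]

theorem rankOne_self_sub_rankOne_self_cube {x y : E} (hx : ‖x‖ = 1) (hy : ‖y‖ = 1) :
    (rankOne 𝕜 x x - rankOne 𝕜 y y) * (rankOne 𝕜 x x - rankOne 𝕜 y y) *
      (rankOne 𝕜 x x - rankOne 𝕜 y y) =
      ((1 - ‖⟪x, y⟫_𝕜‖ ^ 2 : ℝ) : 𝕜) • (rankOne 𝕜 x x - rankOne 𝕜 y y) := by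
  have hxx : ⟪x, x⟫_𝕜 = 1 := by rw [inner_self_eq_norm_sq_to_K, hx]; norm_num
  have hyy : ⟪y, y⟫_𝕜 = 1 := by rw [inner_self_eq_norm_sq_to_K, hy]; norm_num
  have hxy : ((‖⟪x, y⟫_𝕜‖ ^ 2 : ℝ) : 𝕜) = ⟪y, x⟫_𝕜 * ⟪x, y⟫_𝕜 := by
    rw [← inner_conj_symm y x, RCLike.conj_mul]; norm_cast
  ext z
  simp only [hxx, hyy, mul_apply_eq_comp, sub_apply, smul_apply, map_sub, rankOne_apply,
    inner_smul_right, smul_smul, sub_smul, smul_sub, one_smul, RCLike.ofReal_one, hxy]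
  module

theorem norm_inner_eq_one_of_rankOne_self_eq {x y : E} (hx : ‖x‖ = 1) (hy : ‖y‖ = 1)
    (h : rankOne 𝕜 x x = rankOne 𝕜 y y) : ‖⟪x, y⟫_𝕜‖ = 1 := by
  have := congr(‖$h x‖)
  simpa [norm_smul, hx, hy, norm_inner_symm] using this.symm

theorem norm_rankOne_self_sub_rankOne_self_sq [CompleteSpace E] {x y : E} (hx : ‖x‖ = 1)
    (hy : ‖y‖ = 1) : ‖rankOne 𝕜 x x - rankOne 𝕜 y y‖ ^ 2 = 1 - ‖⟪x, y⟫_𝕜‖ ^ 2 := by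
  by_cases h : rankOne 𝕜 x x = rankOne 𝕜 y y
  · simp [h, norm_inner_eq_one_of_rankOne_self_eq hx hy h]
  have hsa : IsSelfAdjoint (rankOne 𝕜 x x - rankOne 𝕜 y y) :=
    (isStarProjection_rankOne_self hx).isSelfAdjoint.sub
      (isStarProjection_rankOne_self hy).isSelfAdjoint
  have hxy : ‖⟪x, y⟫_𝕜‖ ≤ 1 := by simpa [hx, hy] using norm_inner_le_norm (𝕜 := 𝕜) x y
  rw [hsa.norm_sq_eq_norm_of_mul_mul_self_eq_smul (sub_ne_zero.mpr h)
    (rankOne_self_sub_rankOne_self_cube hx hy), RCLike.norm_ofReal, abs_of_nonneg]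
  nlinarith [norm_nonneg ⟪x, y⟫_𝕜]

end InnerProductSpace

theorem rank_one_projections_dist_one_orthogonal_general {H : Type*} [NormedAddCommGroup H]
    [InnerProductSpace ℂ H] [CompleteSpace H] (e v : H →L[ℂ] H)
    (hei : IsIdempotentElem e) (hes : IsSelfAdjoint e)
    (hvi : IsIdempotentElem v) (hvs : IsSelfAdjoint v)
    (hre : Module.finrank ℂ (LinearMap.range (e : H →ₗ[ℂ] H)) = 1)
    (hrv : Module.finrank ℂ (LinearMap.range (v : H →ₗ[ℂ] H)) = 1)
    (hdist : ‖e - v‖ = 1) :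
    e * v = 0 := by
  obtain ⟨x, hx, rfl⟩ :=
    (IsStarProjection.mk hei hes).exists_eq_rankOne_self_of_finrank_range_eq_one hre
  obtain ⟨y, hy, rfl⟩ :=
    (IsStarProjection.mk hvi hvs).exists_eq_rankOne_self_of_finrank_range_eq_one hrv
  have hxy : ⟪x, y⟫_ℂ = 0 := by
    have h := norm_rankOne_self_sub_rankOne_self_sq (𝕜 := ℂ) hx hy
    rw [hdist] at h
    simpa using (show ‖⟪x, y⟫_ℂ‖ ^ 2 = 0 by linarith)
  rw [ContinuousLinearMap.mul_def, rankOne_comp_rankOne, hxy, zero_smul]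

/-- Two distinct rank-one projections on a complex Hilbert space at distance `1` are
orthogonal. -/
theorem rank_one_projections_dist_one_orthogonal {H : Type*} [NormedAddCommGroup H]
    [InnerProductSpace ℂ H] [CompleteSpace H] (e v : H →L[ℂ] H)
    (hei : IsIdempotentElem e) (hes : IsSelfAdjoint e)
    (hvi : IsIdempotentElem v) (hvs : IsSelfAdjoint v)
    (hre : Module.finrank ℂ (LinearMap.range (e : H →ₗ[ℂ] H)) = 1)
    (hrv : Module.finrank ℂ (LinearMap.range (v : H →ₗ[ℂ] H)) = 1)
    (hne : e ≠ v) (hdist : ‖e - v‖ = 1) :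
    e * v = 0 :=
  rank_one_projections_dist_one_orthogonal_general e v hei hes hvi hvs hre hrv hdist
end
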